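/- Let K = (G, M, I) be a finite formal context and H ⊆ G with |H| = n. If there exists a bijective local full scale-measure σ : H → [n] from K into the contranominal scale B_n, then for every nonempty H' ⊆ H with |H'| = k there exists a bijective local full scale-measure from K (with domain H') into the contranominal scale B_k. -/

import Mathlib

/-- The intent (common attributes) of a set of objects. -/
def intentOf {G M : Type*} (Inc : G → M → Prop) (A : Set G) : Set M :=
  {m | ∀ g ∈ A, Inc g m}

/-- The extent (common objects) of a set of attributes. -/
def extentOf {G M : Type*} (Inc : G → M → Prop) (B : Set M) : Set G :=
  {g | ∀ m ∈ B, Inc g m}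

/-- The set of extents of the formal context `(G, M, Inc)`. -/
def Extents {G M : Type*} (Inc : G → M → Prop) : Set (Set G) :=
  {A | extentOf Inc (intentOf Inc A) = A}

/-- The object closure operator `φ` of a formal context: `φ(A) = A''`. -/
def closureK {G M : Type*} (Inc : G → M → Prop) (A : Set G) : Set G :=
  extentOf Inc (intentOf Inc A)

/-- `σ` is a scale-measure from `(G,M,Inc)` into `(GS,MS,IncS)`. -/
def IsScaleMeasure {G M GS MS : Type*} (Inc : G → M → Prop) (IncS : GS → MS → Prop)
    (σ : G → GS) : Prop :=
  ∀ A ∈ Extents IncS, σ ⁻¹' A ∈ Extents Inc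

/-- `σ` is a full scale-measure from `(G,M,Inc)` into `(GS,MS,IncS)`. -/
def IsFullScaleMeasure {G M GS MS : Type*} (Inc : G → M → Prop) (IncS : GS → MS → Prop)
    (σ : G → GS) : Prop :=
  IsScaleMeasure Inc IncS σ ∧ Extents Inc = (fun A => σ ⁻¹' A) '' Extents IncS

/-- The incidence of the induced subcontext `K[H, M]`. -/
def subInc {G M : Type*} (Inc : G → M → Prop) (H : Set G) : ↥H → M → Prop :=
  fun h m => Inc h.1 m

/-- `σ : H → GS` is a local full scale-measure from `K` into `S`, i.e. a full
scale-measure from `K[H,M]` into `S`. -/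
def IsLocalFullScaleMeasure {G M GS MS : Type*} (Inc : G → M → Prop) (H : Set G)
    (IncS : GS → MS → Prop) (σ : ↥H → GS) : Prop :=
  IsFullScaleMeasure (subInc Inc H) IncS σ

/-- Nominal scale `N_n = ([n],[n],=)` (objects/attributes modelled by `Fin n`). -/
def nominalInc (n : ℕ) : Fin n → Fin n → Prop := fun a b => a = b

/-- Contranominal scale `B_n = ([n],[n],≠)`. -/
def contranominalInc (n : ℕ) : Fin n → Fin n → Prop := fun a b => a ≠ b

/-- Ordinal scale `O_n = ([n],[n],≤)`. -/
def ordinalInc (n : ℕ) : Fin n → Fin n → Prop := fun a b => a ≤ b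

/-- Interordinal scale `I_n = ([n],[n],≤) | ([n],[n],≥)`. -/
def interordinalInc (n : ℕ) : Fin n → Fin n ⊕ Fin n → Prop :=
  fun g m => Sum.elim (fun a => g ≤ a) (fun a => a ≤ g) m

/-- Crown scale `C_n = ([n],[n],J)` with `(a,b) ∈ J` iff `a = b`, `b = a+1`, or
`(a,b) = (n,1)` (here `Fin n` is `0`-indexed, so `(n,1)` becomes `(n-1,0)`). -/
def crownInc (n : ℕ) : Fin n → Fin n → Prop :=
  fun a b => a = b ∨ (b : ℕ) = (a : ℕ) + 1 ∨ ((a : ℕ) = n - 1 ∧ (b : ℕ) = 0)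

/-!
In the contranominal scale every set of objects is an extent. An injective full scale-measure
into a context all of whose object sets are extents forces the same of the source context, and
conversely any injection between two such contexts is a full scale-measure. So a bijective local
full scale-measure `H → B_n` says exactly that every subset of `H` is an extent of `K[H, M]`; this
property passes to the subcontext on any `H' ⊆ H`, and then any bijection `H' ≃ [k]` is a full
scale-measure into `B_k`.
-/

open Function Set

theorem subset_extentOf_intentOf {G M : Type*} (Inc : G → M → Prop) (A : Set G) :
    A ⊆ extentOf Inc (intentOf Inc A) :=
  fun g hg _ hm => hm g hg

theorem extents_ne (α : Type*) : Extents (fun a b : α => a ≠ b) = univ := by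
  refine eq_univ_of_forall fun A => (subset_extentOf_intentOf _ A).antisymm' fun g hg => ?_
  by_contra hgA
  exact hg g (fun a ha hag => hgA (hag ▸ ha)) rfl

theorem extents_contranominalInc (n : ℕ) : Extents (contranominalInc n) = univ :=
  extents_ne (Fin n)

theorem isFullScaleMeasure_iff_extents_eq_univ {G M GS MS : Type*} {Inc : G → M → Prop}
    {IncS : GS → MS → Prop} (hS : Extents IncS = univ) {σ : G → GS} (hσ : Injective σ) :
    IsFullScaleMeasure Inc IncS σ ↔ Extents Inc = univ := by
  have preimages_eq_univ : (fun A => σ ⁻¹' A) '' Extents IncS = univ := by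
    rw [hS, image_univ]
    exact eq_univ_of_forall fun A => ⟨σ '' A, preimage_image_eq A hσ⟩
  rw [IsFullScaleMeasure, preimages_eq_univ]
  exact ⟨And.right, fun hK => ⟨fun _ _ => hK ▸ mem_univ _, hK⟩⟩

theorem extents_comp_eq_univ {G G' M : Type*} {Inc : G → M → Prop} (hK : Extents Inc = univ)
    {f : G' → G} (hf : Injective f) : Extents (fun g m => Inc (f g) m) = univ := by
  refine eq_univ_of_forall fun A => (subset_extentOf_intentOf _ A).antisymm' fun g hg => ?_
  have himage : f '' A ∈ Extents Inc := hK ▸ mem_univ _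
  have hfg : f g ∈ extentOf Inc (intentOf Inc (f '' A)) :=
    fun m hm => hg m fun a ha => hm (f a) (mem_image_of_mem f ha)
  rw [himage] at hfg
  exact hf.mem_set_image.1 hfg

theorem extents_subInc_eq_univ_of_subset {G M : Type*} {Inc : G → M → Prop} {H H' : Set G}
    (hH : Extents (subInc Inc H) = univ) (hsub : H' ⊆ H) : Extents (subInc Inc H') = univ :=
  extents_comp_eq_univ hH (inclusion_injective hsub)

theorem stmt16_general {G M : Type*} (Inc : G → M → Prop)
    (H : Set G) {n : ℕ}
    (σ : ↥H → Fin n) (hb : Function.Bijective σ)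
    (h : IsLocalFullScaleMeasure Inc H (contranominalInc n) σ) :
    ∀ H' ⊆ H, ∀ k : ℕ, H'.Nonempty → H'.ncard = k →
      ∃ τ : ↥H' → Fin k, Function.Bijective τ ∧
        IsLocalFullScaleMeasure Inc H' (contranominalInc k) τ := by
  intro H' hsub k _ hcard
  have hH : Extents (subInc Inc H) = univ :=
    (isFullScaleMeasure_iff_extents_eq_univ (extents_contranominalInc n) hb.1).1 h
  have : Finite H := Finite.of_injective σ hb.1
  have : Finite H' := Finite.Set.subset H hsub
  let e : H' ≃ Fin k := Finite.equivFinOfCardEq (by rw [Nat.card_coe_set_eq, hcard])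
  exact ⟨e, e.bijective, (isFullScaleMeasure_iff_extents_eq_univ (extents_contranominalInc k)
    e.injective).2 (extents_subInc_eq_univ_of_subset hH hsub)⟩

/-- Heredity of local full scale-measures into contranominal scales. -/
theorem stmt16 {G M : Type*} [Finite G] [Finite M] (Inc : G → M → Prop)
    (H : Set G) {n : ℕ} (hcard : H.ncard = n)
    (σ : ↥H → Fin n) (hb : Function.Bijective σ)
    (h : IsLocalFullScaleMeasure Inc H (contranominalInc n) σ) :
    ∀ H' ⊆ H, ∀ k : ℕ, H'.Nonempty → H'.ncard = k →
      ∃ τ : ↥H' → Fin k, Function.Bijective τ ∧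
        IsLocalFullScaleMeasure Inc H' (contranominalInc k) τ :=
  stmt16_general Inc H σ hb h
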